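/- arXiv:1305.7218 — 9 statements merged into one kernel-verified Lean document; each statement's English description precedes it below -/
import Mathlib

section
/- Let K be a field of characteristic 0, let A, B, C, F ∈ K[X] with B ≠ 0 and F ≠ 0, and let p ∈ K. Suppose that (A′·B − A·B′)·F = p·A·B·C and (C′·B − C·B′)·F = p·A·B·C. Then there exists a constant c ∈ K such that A − C = c·B. -/
/-!
Subtracting the two identities gives `W(A - C, B) · F = 0` for the Wronskian `W(a, b) = a b' - a' b`,
hence `W(A - C, B) = 0`. In characteristic zero a vanishing Wronskian makes two polynomials
proportional: dividing out their gcd leaves a coprime pair with vanishing Wronskian, and such a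
pair has zero derivatives, i.e. consists of constants.
-/

open Polynomial

namespace Polynomial

theorem wronskian_mul_mul_left {R : Type*} [CommRing R] (g a b : R[X]) :
    wronskian (g * a) (g * b) = g ^ 2 * wronskian a b := by
  simp only [wronskian, derivative_mul]
  ring

section CharZeroField

variable {K : Type*} [Field K] [CharZero K]

theorem IsCoprime.exists_eq_C_of_wronskian_eq_zero {a b : K[X]} (hab : IsCoprime a b)
    (hw : wronskian a b = 0) : ∃ x y : K, a = C x ∧ b = C y := by
  obtain ⟨ha, hb⟩ := hab.wronskian_eq_zero_iff.1 hw
  exact ⟨_, _, eq_C_of_derivative_eq_zero ha, eq_C_of_derivative_eq_zero hb⟩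

theorem exists_eq_C_mul_of_wronskian_eq_zero {a b : K[X]} (hb : b ≠ 0)
    (hw : wronskian a b = 0) : ∃ c : K, a = C c * b := by
  classical
  obtain ⟨a', b', ha, hb', hunit⟩ := extract_gcd a b
  set g := gcd a b
  have hg : g ≠ 0 := gcd_ne_zero_of_right hb
  have hw' : wronskian a' b' = 0 := by
    rw [ha, hb', wronskian_mul_mul_left] at hw
    exact (mul_eq_zero.1 hw).resolve_left (pow_ne_zero 2 hg)
  obtain ⟨x, y, rfl, rfl⟩ :=
    ((gcd_isUnit_iff a' b').1 hunit).exists_eq_C_of_wronskian_eq_zero hw'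
  have hy : y ≠ 0 := by
    rintro rfl
    exact hb (by rw [hb', C_0, mul_zero])
  refine ⟨x / y, ?_⟩
  rw [ha, hb', ← mul_assoc, mul_comm (C (x / y)), mul_assoc, ← C_mul, div_mul_cancel₀ x hy]

end CharZeroField

end Polynomial

/-- If `(A'·B − A·B')·F = p·A·B·C` and `(C'·B − C·B')·F = p·A·B·C`, then
`A − C` is a constant multiple of `B`. -/
theorem log_deriv_dependency {K : Type*} [Field K] [CharZero K]
    (A B C F : K[X]) (hB : B ≠ 0) (hF : F ≠ 0) (p : K)
    (h1 : (derivative A * B - A * derivative B) * F = Polynomial.C p * (A * B * C))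
    (h2 : (derivative C * B - C * derivative B) * F = Polynomial.C p * (A * B * C)) :
    ∃ c : K, A - C = Polynomial.C c * B := by
  have hWF : wronskian (A - C) B * F = 0 := by
    rw [wronskian, derivative_sub]
    linear_combination h2 - h1
  exact exists_eq_C_mul_of_wronskian_eq_zero hB ((mul_eq_zero.1 hWF).resolve_right hF)
end

section
/- Let n ≥ 1 be a natural number and let F, G ∈ ℂ[X] be coprime polynomials with deg F = 2n and deg G = 3n, and suppose F³ ≠ G². Then deg(F³ − G²) ≥ n + 1. -/
/-!
Mason–Stothers applied to `-Fᵖ + G^q + (Fᵖ - G^q) = 0`: the radical of the product divides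
`F G (Fᵖ - G^q)`, so `p deg F < deg F + deg G + deg (Fᵖ - G^q)`. Its exceptional case, vanishing
derivatives, is impossible in characteristic zero once `F` is not constant. For `p = 3`, `q = 2`,
`deg F = 2n`, `deg G = 3n` this reads `6n < 5n + deg (F³ - G²)`.
-/

open Polynomial UniqueFactorizationMonoid UniqueFactorizationDomain

section Radical

variable {R : Type*} [CommRing R] [NormalizationMonoid R] [UniqueFactorizationMonoid R]

theorem radical_neg_pow_mul_pow_mul_dvd (F G H : R) (p q : ℕ) :
    radical (-F ^ p * G ^ q * H) ∣ F * G * H := by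
  rw [neg_mul, neg_mul, radical_neg]
  calc radical (F ^ p * G ^ q * H)
      ∣ radical (F ^ p) * radical (G ^ q) * radical H :=
        radical_mul_dvd.trans (mul_dvd_mul_right radical_mul_dvd _)
    _ ∣ F * G * H :=
        mul_dvd_mul (mul_dvd_mul (radical_pow_dvd.trans radical_dvd_self)
          (radical_pow_dvd.trans radical_dvd_self)) radical_dvd_self

end Radical

variable {k : Type*} [Field k] [CharZero k]

theorem Polynomial.mul_natDegree_lt_natDegree_add_natDegree_sub_pow {F G : k[X]} {p q : ℕ}
    (hcop : IsCoprime F G) (hF : 0 < F.natDegree) (hne : F ^ p ≠ G ^ q) :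
    p * F.natDegree < F.natDegree + G.natDegree + (F ^ p - G ^ q).natDegree := by
  classical
  have hF0 : F ≠ 0 := ne_zero_of_natDegree_gt hF
  have hG0 : G ≠ 0 := by
    rintro rfl
    exact not_isUnit_of_natDegree_pos F hF (isCoprime_zero_right.mp hcop)
  have hH0 : F ^ p - G ^ q ≠ 0 := sub_ne_zero.mpr hne
  rcases Polynomial.abc (neg_ne_zero.mpr (pow_ne_zero p hF0)) (pow_ne_zero q hG0) hH0
      hcop.pow.neg_left (by ring) with ⟨hmason, -, -⟩ | ⟨hderiv, -, -⟩
  · have hrad := natDegree_le_of_dvd (radical_neg_pow_mul_pow_mul_dvd F G (F ^ p - G ^ q) p q)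
      (mul_ne_zero (mul_ne_zero hF0 hG0) hH0)
    rw [natDegree_neg, natDegree_pow] at hmason
    rw [natDegree_mul (mul_ne_zero hF0 hG0) hH0, natDegree_mul hF0 hG0] at hrad
    omega
  · rw [derivative_neg, neg_eq_zero, derivative_eq_zero, natDegree_pow] at hderiv
    omega

/-- Davenport–Stothers bound: for coprime `F, G ∈ ℂ[X]` with `deg F = 2n`,
`deg G = 3n` and `F³ ≠ G²`, the degree of `F³ − G²` is at least `n + 1`. -/
theorem davenport_stothers_bound (n : ℕ) (hn : 1 ≤ n) (F G : ℂ[X])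
    (hcop : IsCoprime F G) (hF : F.natDegree = 2 * n) (hG : G.natDegree = 3 * n)
    (hne : F ^ 3 ≠ G ^ 2) :
    n + 1 ≤ (F ^ 3 - G ^ 2).natDegree := by
  have hbound := mul_natDegree_lt_natDegree_add_natDegree_sub_pow hcop (by omega) hne
  rw [hF, hG] at hbound
  omega
end

section
/- Let R be a commutative ring, let F, G, H ∈ R[X] and c ∈ R. Suppose c·G = 3·F′·H − F·H′ and c·F² = 2·G′·H − G·H′. Then c²·F² = 6·F″·H² + F′·H′·H − 2·F·H″·H + F·(H′)². -/
/-!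
Differentiating the first relation expresses `c·G'` through `F`, `H` and their derivatives;
then `c` times the second relation, plus `2H` times the differentiated first one, minus `H'`
times the first one, eliminates `G` and `G'` altogether.
-/

open Polynomial

theorem derivative_three_mul_derivative_mul_sub {R : Type*} [CommRing R] (F H : R[X]) :
    derivative (3 * derivative F * H - F * derivative H) =
      3 * derivative (derivative F) * H + 2 * derivative F * derivative H
        - F * derivative (derivative H) := by
  simp only [derivative_mul, derivative_sub, derivative_ofNat, zero_mul, zero_add]
  ring

/-- Elimination of `G` from the two logarithmic-derivative relations of a
Davenport–Stothers triple: from `c·G = 3F'H − FH'` and `c·F² = 2G'H − GH'`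
we get `c²·F² = 6F''H² + F'H'H − 2FH''H + F·(H')²`. -/
theorem davenport_stothers_eliminate_G {R : Type*} [CommRing R]
    (F G H : R[X]) (c : R)
    (h1 : Polynomial.C c * G = 3 * derivative F * H - F * derivative H)
    (h2 : Polynomial.C c * F ^ 2 = 2 * derivative G * H - G * derivative H) :
    Polynomial.C c ^ 2 * F ^ 2 =
      6 * derivative (derivative F) * H ^ 2
      + derivative F * derivative H * H
      - 2 * F * derivative (derivative H) * H
      + F * derivative H ^ 2 := by
  have h1' : C c * derivative G =
      3 * derivative (derivative F) * H + 2 * derivative F * derivative H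
        - F * derivative (derivative H) := by
    rw [← derivative_C_mul, h1, derivative_three_mul_derivative_mul_sub]
  linear_combination C c * h2 + 2 * H * h1' - derivative H * h1
end

section
/- Let K be a field, let F, H ∈ K[X] be nonzero coprime polynomials, and let c ∈ K. Suppose c²·F² = 6·F″·H² + F′·H′·H − 2·F·H″·H + F·(H′)². Then there exists a polynomial Z ∈ K[X] such that c²·F − (H′)² = H·Z and 6·F″·H + F′·H′ − 2·F·H″ = F·Z. -/
open Polynomial

/-- From `u * F + v * H = 1`, the common quotient is `Z = u * B + v * A`. -/
theorem IsCoprime.exists_eq_mul_of_mul_eq_mul {R : Type*} [CommSemiring R] {F H A B : R}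
    (hcop : IsCoprime F H) (h : F * A = H * B) : ∃ Z, A = H * Z ∧ B = F * Z := by
  obtain ⟨u, v, huv⟩ := hcop
  refine ⟨u * B + v * A, ?_, ?_⟩
  · calc A = (u * F + v * H) * A := by rw [huv, one_mul]
      _ = u * (F * A) + v * H * A := by ring
      _ = H * (u * B + v * A) := by rw [h]; ring
  · calc B = (u * F + v * H) * B := by rw [huv, one_mul]
      _ = u * F * B + v * (H * B) := by ring
      _ = F * (u * B + v * A) := by rw [← h]; ring

theorem davenport_stothers_Z_exists_general {K : Type*} [Field K]
    (F H : K[X]) (hcop : IsCoprime F H) (c : K)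
    (h : Polynomial.C c ^ 2 * F ^ 2 =
      6 * derivative (derivative F) * H ^ 2
      + derivative F * derivative H * H
      - 2 * F * derivative (derivative H) * H
      + F * derivative H ^ 2) :
    ∃ Z : K[X],
      Polynomial.C c ^ 2 * F - derivative H ^ 2 = H * Z ∧
      6 * derivative (derivative F) * H + derivative F * derivative H
        - 2 * F * derivative (derivative H) = F * Z :=
  hcop.exists_eq_mul_of_mul_eq_mul (by linear_combination h)

/-- For coprime nonzero `F, H` with
`c²F² = 6F''H² + F'H'H − 2FH''H + F(H')²`, the common rational function
`(c²F − (H')²)/H = (6F''H + F'H' − 2FH'')/F` is a polynomial `Z`. -/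
theorem davenport_stothers_Z_exists {K : Type*} [Field K]
    (F H : K[X]) (hF : F ≠ 0) (hH : H ≠ 0) (hcop : IsCoprime F H) (c : K)
    (h : Polynomial.C c ^ 2 * F ^ 2 =
      6 * derivative (derivative F) * H ^ 2
      + derivative F * derivative H * H
      - 2 * F * derivative (derivative H) * H
      + F * derivative H ^ 2) :
    ∃ Z : K[X],
      Polynomial.C c ^ 2 * F - derivative H ^ 2 = H * Z ∧
      6 * derivative (derivative F) * H + derivative F * derivative H
        - 2 * F * derivative (derivative H) = F * Z :=
  davenport_stothers_Z_exists_general F H hcop c h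
end

section
/- Let K be a field of characteristic 0, let n ≥ 1 be a natural number, let F, H ∈ K[X] be monic polynomials with deg F = 2n and deg H = n + 1, and let Z ∈ K[X] satisfy F·Z = 6·F″·H + F′·H′ − 2·F·H″. Then deg Z = n − 1 and the leading coefficient of Z equals the image of 12n(2n−1) in K. -/
/-!
Compare coefficients of `X^(3n-1)`. Each of `F″H`, `F′H′`, `FH″` has degree at most `3n - 1`,
with coefficients `2n(2n-1)`, `2n(n+1)`, `(n+1)n` there, so the numerator has coefficient
`6·2n(2n-1) + 2n(n+1) - 2(n+1)n = 12n(2n-1)` at `X^(3n-1)`, which is nonzero in characteristic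
zero. Dividing by the monic `F` of degree `2n` lowers the degree by `2n` and keeps the leading
coefficient.
-/

open Polynomial

namespace Polynomial

variable {R : Type*}

section Semiring

variable [Semiring R] {p q : R[X]} {a b i j : ℕ}

theorem Monic.natDegree_eq_natDegree_mul_sub (hp : p.Monic) :
    q.natDegree = (p * q).natDegree - p.natDegree := by
  rcases eq_or_ne q 0 with rfl | hq
  · simp
  · rw [hp.natDegree_mul' hq, Nat.add_sub_cancel_left]

theorem natDegree_iterate_derivative_mul_iterate_derivative_le (hp : p.natDegree ≤ a + i)
    (hq : q.natDegree ≤ b + j) : (derivative^[i] p * derivative^[j] q).natDegree ≤ a + b :=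
  natDegree_mul_le_of_le ((natDegree_iterate_derivative p i).trans (by omega))
    ((natDegree_iterate_derivative q j).trans (by omega))

theorem coeff_iterate_derivative_mul_iterate_derivative {n : ℕ} (hp : p.natDegree ≤ a + i)
    (hq : q.natDegree ≤ b + j) (hn : a + b = n) :
    (derivative^[i] p * derivative^[j] q).coeff n =
      ((a + i).descFactorial i • p.coeff (a + i)) * ((b + j).descFactorial j • q.coeff (b + j)) := by
  rw [← hn, coeff_mul_add_eq_of_natDegree_le ((natDegree_iterate_derivative p i).trans (by omega))
    ((natDegree_iterate_derivative q j).trans (by omega)), coeff_iterate_derivative,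
    coeff_iterate_derivative]

end Semiring

section CommRing

variable [CommRing R]

/-- The numerator of `Z = (6F″H + F′H′ − 2FH″)/F`. -/
noncomputable def davenportStothersNumerator (F H : R[X]) : R[X] :=
  6 * derivative (derivative F) * H + derivative F * derivative H - 2 * F * derivative (derivative H)

variable {F H : R[X]} {a b : ℕ}

theorem natDegree_davenportStothersNumerator_le (hF : F.natDegree ≤ a + 2)
    (hH : H.natDegree ≤ b + 2) : (davenportStothersNumerator F H).natDegree ≤ a + b + 2 := by
  have h₁ : (derivative (derivative F) * H).natDegree ≤ a + (b + 2) :=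
    natDegree_iterate_derivative_mul_iterate_derivative_le (i := 2) (j := 0) hF hH
  have h₂ : (derivative F * derivative H).natDegree ≤ a + 1 + (b + 1) :=
    natDegree_iterate_derivative_mul_iterate_derivative_le (i := 1) (j := 1) hF hH
  have h₃ : (F * derivative (derivative H)).natDegree ≤ a + 2 + b :=
    natDegree_iterate_derivative_mul_iterate_derivative_le (i := 0) (j := 2) hF hH
  unfold davenportStothersNumerator
  refine (natDegree_sub_le _ _).trans (max_le ((natDegree_add_le _ _).trans (max_le ?_ ?_)) ?_)
  · rw [mul_assoc]; exact (natDegree_mul_le_of_le (natDegree_ofNat 6).le h₁).trans (by omega)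
  · exact h₂.trans (by omega)
  · rw [mul_assoc]; exact (natDegree_mul_le_of_le (natDegree_ofNat 2).le h₃).trans (by omega)

theorem coeff_davenportStothersNumerator (hF : F.natDegree ≤ a + 2) (hH : H.natDegree ≤ b + 2) :
    (davenportStothersNumerator F H).coeff (a + b + 2) =
      (6 * (a + 2) * (a + 1) + (a + 2) * (b + 2) - 2 * (b + 2) * (b + 1)) *
        F.coeff (a + 2) * H.coeff (b + 2) := by
  have h₁ : (derivative (derivative F) * H).coeff (a + b + 2) = _ :=
    coeff_iterate_derivative_mul_iterate_derivative (i := 2) (j := 0) (b := b + 2) hF hH (by ring)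
  have h₂ : (derivative F * derivative H).coeff (a + b + 2) = _ :=
    coeff_iterate_derivative_mul_iterate_derivative (i := 1) (j := 1) (a := a + 1) (b := b + 1)
      hF hH (by ring)
  have h₃ : (F * derivative (derivative H)).coeff (a + b + 2) = _ :=
    coeff_iterate_derivative_mul_iterate_derivative (i := 0) (j := 2) (a := a + 2) hF hH (by ring)
  unfold davenportStothersNumerator
  rw [coeff_sub, coeff_add, mul_assoc, mul_assoc 2, coeff_ofNat_mul, coeff_ofNat_mul, h₁, h₂, h₃]
  simp only [Nat.descFactorial, Nat.add_one_sub_one, tsub_zero, mul_one, nsmul_eq_mul, Nat.cast_mul,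
    Nat.cast_add, Nat.cast_one, Nat.cast_ofNat, add_zero, one_smul]
  ring

end CommRing

end Polynomial

/-- For monic `F`, `H` of degrees `2n` and `n+1`, a polynomial `Z` with
`F·Z = 6F''H + F'H' − 2FH''` has degree `n − 1` and leading coefficient
`12n(2n−1)`. -/
theorem davenport_stothers_Z_degree {K : Type*} [Field K] [CharZero K]
    (n : ℕ) (hn : 1 ≤ n) (F H Z : K[X]) (hF : F.Monic) (hH : H.Monic)
    (hFdeg : F.natDegree = 2 * n) (hHdeg : H.natDegree = n + 1)
    (hZ : F * Z = 6 * derivative (derivative F) * H + derivative F * derivative H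
      - 2 * F * derivative (derivative H)) :
    Z.natDegree = n - 1 ∧ Z.leadingCoeff = ((12 * n * (2 * n - 1) : ℕ) : K) := by
  obtain ⟨m, rfl⟩ : ∃ m, n = m + 1 := ⟨n - 1, by omega⟩
  replace hFdeg : F.natDegree = 2 * m + 2 := by omega
  replace hHdeg : H.natDegree = m + 2 := by omega
  replace hZ : F * Z = davenportStothersNumerator F H := hZ
  have hcoeff : (davenportStothersNumerator F H).coeff (2 * m + m + 2) =
      ((12 * (m + 1) * (2 * (m + 1) - 1) : ℕ) : K) := by
    rw [coeff_davenportStothersNumerator hFdeg.le hHdeg.le, ← hFdeg, ← hHdeg, hF.coeff_natDegree,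
      hH.coeff_natDegree, show 2 * (m + 1) - 1 = 2 * m + 1 by omega]
    push_cast
    ring
  have hdeg : (davenportStothersNumerator F H).natDegree = 2 * m + m + 2 :=
    natDegree_eq_of_le_of_coeff_ne_zero
      (natDegree_davenportStothersNumerator_le hFdeg.le hHdeg.le)
      (hcoeff ▸ Nat.cast_ne_zero.2 (Nat.mul_pos (by positivity) (by omega)).ne')
  constructor
  · rw [hF.natDegree_eq_natDegree_mul_sub, hZ, hdeg, hFdeg]
    omega
  · rw [← leadingCoeff_monic_mul hF, hZ, leadingCoeff, hdeg, hcoeff]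
end

section
/- Let K be an integral domain, let F, H, Z ∈ K[X] with H ≠ 0, and let c ∈ K. Suppose c²·F = H·Z + (H′)² and 6·F″·H + F′·H′ − 2·F·H″ = F·Z. Then 12·H′·H‴ + 12·(H″)² + 4·H″·Z + 13·H′·Z′ + 6·H·Z″ = Z². -/
/-!
Differentiating `c²F = HZ + H'²` once and twice expresses `c²F'` and `c²F''` through `H` and `Z`
alone. Multiplying the second hypothesis by `c²` and substituting these, together with `c²F`
itself, turns it into `H · (12H'H''' + 12H''² + 4H''Z + 13H'Z' + 6HZ'' - Z²) = 0`, and `H ≠ 0`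
in the domain `K[X]` finishes.
-/

open Polynomial

section
variable {R : Type*} [CommSemiring R] (H Z : R[X])

theorem derivative_mul_add_derivative_sq :
    derivative (H * Z + derivative H ^ 2)
      = derivative H * Z + H * derivative Z
        + 2 * derivative H * derivative (derivative H) := by
  simp only [derivative_add, derivative_mul, sq]
  ring

theorem derivative_derivative_mul_add_derivative_sq :
    derivative (derivative (H * Z + derivative H ^ 2))
      = derivative (derivative H) * Z + 2 * derivative H * derivative Z
        + H * derivative (derivative Z) + 2 * derivative (derivative H) ^ 2
        + 2 * derivative H * derivative (derivative (derivative H)) := by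
  rw [derivative_mul_add_derivative_sq]
  simp only [derivative_add, derivative_mul, derivative_ofNat, zero_mul, zero_add]
  ring

end

/-- The differential relation between `H` and `Z` for Davenport–Stothers
triples, obtained by eliminating `F`:
`12H'H''' + 12(H'')² + 4H''Z + 13H'Z' + 6HZ'' = Z²`. -/
theorem davenport_stothers_HZ_relation {K : Type*} [CommRing K] [IsDomain K]
    (F H Z : K[X]) (hH : H ≠ 0) (c : K)
    (h1 : Polynomial.C c ^ 2 * F = H * Z + derivative H ^ 2)
    (h2 : 6 * derivative (derivative F) * H + derivative F * derivative H
      - 2 * F * derivative (derivative H) = F * Z) :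
    12 * derivative H * derivative (derivative (derivative H))
      + 12 * derivative (derivative H) ^ 2
      + 4 * derivative (derivative H) * Z
      + 13 * derivative H * derivative Z
      + 6 * H * derivative (derivative Z) = Z ^ 2 := by
  rw [← C_pow] at h1
  have hF' := derivative_mul_add_derivative_sq H Z
  have hF'' := derivative_derivative_mul_add_derivative_sq H Z
  simp only [← h1, derivative_C_mul] at hF' hF''
  apply mul_left_cancel₀ hH
  linear_combination C (c ^ 2) * h2 - 6 * H * hF'' - derivative H * hF'
    + (Z + 2 * derivative (derivative H)) * h1
end

section
/- Let R be a commutative ring and n a natural number. Set F = (T R n).comp(1 − 2·X). Then 2·X·(X − 1)·F″ + (2·X − 1)·F′ = 2·n²·F. -/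
open Polynomial Polynomial.Chebyshev

section ChangeOfVariable

variable {R : Type*} [CommRing R]

lemma derivative_comp_one_sub_two_mul_X (p : R[X]) :
    derivative (p.comp (1 - 2 * X)) = -2 * (derivative p).comp (1 - 2 * X) := by
  rw [derivative_comp]
  congr 1
  simp [derivative_sub, derivative_mul]

/-- With `q = 1 - 2X` one has `1 - q² = -4X(X - 1)` and `q′ = -2`, so the Chebyshev-type
equation for `p` becomes, after composing with `q`, a hypergeometric equation for `p ∘ q`. -/
theorem hypergeometric_ode_comp_one_sub_two_mul_X {p : R[X]} {c : R}
    (hp : (1 - X ^ 2) * derivative (derivative p) = X * derivative p - C c * p) :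
    2 * X * (X - 1) * derivative (derivative (p.comp (1 - 2 * X)))
      + (2 * X - 1) * derivative (p.comp (1 - 2 * X)) =
      2 * C c * p.comp (1 - 2 * X) := by
  have hq := congr_arg (fun r : R[X] => r.comp (1 - 2 * X)) hp
  simp only [mul_comp, sub_comp, one_comp, pow_comp, X_comp, C_comp] at hq
  simp only [derivative_comp_one_sub_two_mul_X, derivative_mul, derivative_neg,
    derivative_ofNat]
  linear_combination (-2 : R[X]) * hq

end ChangeOfVariable

/-- `F = T_n(1−2X)` satisfies the hypergeometric differential equation
`2X(X−1)F'' + (2X−1)F' = 2n²F`. -/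
theorem chebyshev_T_hypergeometric (R : Type*) [CommRing R] (n : ℕ) :
    2 * X * (X - 1) * derivative (derivative ((T R n).comp (1 - 2 * X)))
      + (2 * X - 1) * derivative ((T R n).comp (1 - 2 * X)) =
      2 * (n : R[X]) ^ 2 * (T R n).comp (1 - 2 * X) := by
  have hT := one_sub_X_sq_mul_derivative_derivative_T_eq_poly_in_T (R := R) n
  rw [Function.iterate_succ_apply, Function.iterate_one] at hT
  have hode := hypergeometric_ode_comp_one_sub_two_mul_X (c := (n : R) ^ 2)
    (by simpa using hT)
  simpa using hode
end

section
/- Let K be a field with char K ≠ 2, let A ∈ K be a non-square, let L be a quadratic extension of K containing an element s with s² = A, and let σ : L ≃ₐ[K] L be the nontrivial automorphism, so σ(s) = −s. Let B ∈ K with B ≠ 0 and let b₀, b₁, d₀, d₁ ∈ K. In the field RatFunc L of rational functions, set μ = (s·X + (b₀ + b₁·s)) / (X + (d₀ + d₁·s)), let σ̂(μ) = ((−s)·X + (b₀ − b₁·s)) / (X + (d₀ − d₁·s)) be the result of applying σ to the coefficients of μ, and let μ∘ν = (s·B + (b₀ + b₁·s)·X) / (B + (d₀ + d₁·s)·X)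 be the result of substituting ν = B/X into μ. Then σ̂(μ) = μ∘ν holds in RatFunc L if and only if b₁ = −d₀, b₀ = −A·d₁, and d₀² = A·d₁² + B. -/
/-!
Clearing denominators turns `σ̂(μ) = μ∘ν` into an equality of quadratic polynomials over `L`,
i.e. three equations between their coefficients. Reducing with `s² = A` and using that `1, s`
are `K`-linearly independent (as `A` is not a square), the `X²`-coefficients give `b₁ = -d₀`
and `b₀ = -A d₁`, the `X`-coefficients give `2s(b₀d₁ - b₁d₀ - B) = 0`, i.e. the conic
equation since `char K ≠ 2`, and the constant coefficients are then automatic.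
-/

namespace Polynomial

variable {R : Type*}

theorem quadratic_inj [Semiring R] {a b c a' b' c' : R} :
    C a * X ^ 2 + C b * X + C c = C a' * X ^ 2 + C b' * X + C c' ↔
      a = a' ∧ b = b' ∧ c = c' := by
  refine ⟨fun h => ⟨?_, ?_, ?_⟩, by rintro ⟨rfl, rfl, rfl⟩; rfl⟩
  · simpa using congr_arg (coeff · 2) h
  · simpa using congr_arg (coeff · 1) h
  · simpa using congr_arg (coeff · 0) h

theorem linear_mul_linear_eq_iff [CommRing R] {a b c p q r t : R} :
    (C a * X + C b) * (C r + C t * X) = (C p + C q * X) * (X + C c) ↔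
      a * t = q ∧ a * r + b * t = p + q * c ∧ b * r = p * c := by
  rw [show (C a * X + C b) * (C r + C t * X) =
      C (a * t) * X ^ 2 + C (a * r + b * t) * X + C (b * r) by simp only [map_mul, map_add]; ring,
    show (C p + C q * X) * (X + C c) = C q * X ^ 2 + C (p + q * c) * X + C (p * c) by
      simp only [map_mul, map_add]; ring,
    quadratic_inj]

end Polynomial

namespace RatFunc

theorem linear_div_linear_eq_iff {F : Type*} [Field F] {a b c p q r t : F} (hr : r ≠ 0) :
    (C a * X + C b) / (X + C c) = (C p + C q * X) / (C r + C t * X) ↔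
      a * t = q ∧ a * r + b * t = p + q * c ∧ b * r = p * c := by
  have hden₁ : (X + C c : RatFunc F) ≠ 0 := by
    rw [← algebraMap_X, ← algebraMap_C, ← map_add]
    exact algebraMap_ne_zero (Polynomial.X_add_C_ne_zero c)
  have hden₂ : (C r + C t * X : RatFunc F) ≠ 0 := by
    rw [← algebraMap_X, ← algebraMap_C, ← algebraMap_C, ← map_mul, ← map_add]
    exact algebraMap_ne_zero (ne_of_apply_ne (Polynomial.coeff · 0) (by simpa using hr))
  rw [div_eq_div_iff hden₁ hden₂]
  simp only [← algebraMap_C, ← algebraMap_X, ← map_mul, ← map_add,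
    (algebraMap_injective F).eq_iff, Polynomial.linear_mul_linear_eq_iff]

end RatFunc

section QuadraticExtension

variable {K L : Type*} [Field K] [Ring L] [Nontrivial L] [Algebra K L]

theorem notMem_range_algebraMap_of_sq_eq {A : K} (hA : ¬IsSquare A) {s : L}
    (hs : s ^ 2 = algebraMap K L A) : s ∉ Set.range (algebraMap K L) := by
  rintro ⟨r, rfl⟩
  exact hA ⟨r, (algebraMap K L).injective (by rw [map_mul, ← hs, sq])⟩

theorem algebraMap_add_algebraMap_mul_eq_zero_iff {s : L}
    (hs : s ∉ Set.range (algebraMap K L)) {u v : K} :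
    algebraMap K L u + algebraMap K L v * s = 0 ↔ u = 0 ∧ v = 0 := by
  refine ⟨fun h => ?_, by rintro ⟨rfl, rfl⟩; simp⟩
  obtain rfl | hv := eq_or_ne v 0
  · simpa using h
  refine absurd ⟨-u / v, ?_⟩ hs
  rw [div_eq_inv_mul, map_mul, map_neg, neg_eq_of_add_eq_zero_right h, ← mul_assoc, ← map_mul,
    inv_mul_cancel₀ hv, map_one, one_mul]

end QuadraticExtension

theorem moebius_conic_condition_general {K L : Type*} [Field K] [Field L] [Algebra K L]
    (hchar : ringChar K ≠ 2) (A : K) (hA : ¬ IsSquare A)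
    (s : L) (hs : s ^ 2 = algebraMap K L A)
    (B : K) (hB : B ≠ 0) (b₀ b₁ d₀ d₁ : K) :
    (RatFunc.C (-s) * RatFunc.X
        + RatFunc.C (algebraMap K L b₀ - algebraMap K L b₁ * s)) /
      (RatFunc.X + RatFunc.C (algebraMap K L d₀ - algebraMap K L d₁ * s))
    = (RatFunc.C s * RatFunc.C (algebraMap K L B)
        + RatFunc.C (algebraMap K L b₀ + algebraMap K L b₁ * s) * RatFunc.X) /
      (RatFunc.C (algebraMap K L B)
        + RatFunc.C (algebraMap K L d₀ + algebraMap K L d₁ * s) * RatFunc.X)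
    ↔ (b₁ = -d₀ ∧ b₀ = -(A * d₁) ∧ d₀ ^ 2 = A * d₁ ^ 2 + B) := by
  have hsK := notMem_range_algebraMap_of_sq_eq hA hs
  rw [← map_mul, RatFunc.linear_div_linear_eq_iff ((map_ne_zero _).2 hB)]
  constructor
  · rintro ⟨hX₂, hX₁, -⟩
    obtain ⟨hb₀, hb₁⟩ := (algebraMap_add_algebraMap_mul_eq_zero_iff hsK
      (u := b₀ + A * d₁) (v := b₁ + d₀)).1 <| by
        simp only [map_add, map_mul]; linear_combination -hX₂ - algebraMap K L d₁ * hs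
    obtain ⟨-, hdet⟩ := (algebraMap_add_algebraMap_mul_eq_zero_iff hsK
      (u := 0) (v := 2 * (b₀ * d₁ - b₁ * d₀ - B))).1 <| by
        simp only [map_zero, map_mul, map_sub, map_ofNat]; linear_combination hX₁
    have hconic := (mul_eq_zero.1 hdet).resolve_left (Ring.two_ne_zero hchar)
    exact ⟨by linear_combination hb₁, by linear_combination hb₀,
      by linear_combination hconic - d₁ * hb₀ + d₀ * hb₁⟩
  · rintro ⟨rfl, rfl, hconic⟩
    have hconicL := congr_arg (algebraMap K L) hconic
    simp only [map_add, map_mul, map_pow, map_neg] at hconicL ⊢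
    exact ⟨by linear_combination -algebraMap K L d₁ * hs, by linear_combination 2 * s * hconicL,
      by linear_combination algebraMap K L d₁ * algebraMap K L B * hs⟩

/-- The conic condition for realization fields: with `μ = (sX + b₀ + b₁s)/(X + d₀ + d₁s)`,
the identity `σ̂(μ) = μ∘ν` (where `ν : x ↦ B/x` and `σ̂` conjugates `s ↦ −s` in the
coefficients) holds if and only if `b₁ = −d₀`, `b₀ = −A·d₁` and `d₀² = A·d₁² + B`. -/
theorem moebius_conic_condition {K L : Type*} [Field K] [Field L] [Algebra K L]
    (hchar : ringChar K ≠ 2) (A : K) (hA : ¬ IsSquare A)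
    (hquad : Module.finrank K L = 2)
    (s : L) (hs : s ^ 2 = algebraMap K L A)
    (σ : L ≃ₐ[K] L) (hσ : σ s = -s)
    (B : K) (hB : B ≠ 0) (b₀ b₁ d₀ d₁ : K) :
    (RatFunc.C (-s) * RatFunc.X
        + RatFunc.C (algebraMap K L b₀ - algebraMap K L b₁ * s)) /
      (RatFunc.X + RatFunc.C (algebraMap K L d₀ - algebraMap K L d₁ * s))
    = (RatFunc.C s * RatFunc.C (algebraMap K L B)
        + RatFunc.C (algebraMap K L b₀ + algebraMap K L b₁ * s) * RatFunc.X) /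
      (RatFunc.C (algebraMap K L B)
        + RatFunc.C (algebraMap K L d₀ + algebraMap K L d₁ * s) * RatFunc.X)
    ↔ (b₁ = -d₀ ∧ b₀ = -(A * d₁) ∧ d₀ ^ 2 = A * d₁ ^ 2 + B) :=
  moebius_conic_condition_general hchar A hA s hs B hB b₀ b₁ d₀ d₁
end

section
/- Let L be a field, let σ : L ≃+* L be a field automorphism, and let σ̂ : RatFunc L ≃+* RatFunc L be the induced automorphism acting on coefficients and fixing X. For f ∈ RatFunc L and a nonconstant m ∈ RatFunc L, write f ∘ m for the image of f under the field embedding of RatFunc L into itself that is the identity on L and sends X to m. Let φ, g, μ, ν ∈ RatFunc L, where μ and ν are Möbius transformations (i.e. of the form (aX + b)/(cX + d) with a·d − b·c ≠ 0). If φ = g ∘ μ, σ̂(φ) = φ ∘ ν, and σ̂(μ) = μ ∘ ν, then σ̂(g) = g. -/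
/-!
Conjugating coefficients is compatible with substitution: `σ̂ (g ∘ μ) = σ̂ g ∘ σ̂ μ`, since both
sides are ring homomorphisms in `g` agreeing on constants and on `X`. With `σ̂ μ = μ ∘ ν` this
gives `φ ∘ ν = σ̂ φ = σ̂ g ∘ μ ∘ ν`, i.e. `g ∘ μ ∘ ν = σ̂ g ∘ μ ∘ ν`, and substitution is
injective because it is a ring homomorphism out of a field.
-/

namespace RatFunc

variable {L : Type*} [Field L]

theorem ringHom_ext {K : Type*} [Semiring K] {F G : RatFunc L →+* K}
    (hC : ∀ a : L, F (C a) = G (C a)) (hX : F X = G X) : F = G :=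
  IsLocalization.ringHom_ext (nonZeroDivisors (Polynomial L)) <|
    Polynomial.ringHom_ext (by simpa [algebraMap_C] using hC) (by simpa [algebraMap_X] using hX)

theorem map_subst_eq_subst_map {σ : L →+* L} {E Φ Ψ : RatFunc L →+* RatFunc L}
    (hEC : ∀ a : L, E (C a) = C (σ a)) (hEX : E X = X)
    (hΦC : ∀ a : L, Φ (C a) = C a) (hΨC : ∀ a : L, Ψ (C a) = C a) (hΨX : Ψ X = E (Φ X))
    (f : RatFunc L) : E (Φ f) = Ψ (E f) := by
  have h : E.comp Φ = Ψ.comp E :=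
    ringHom_ext (fun a => by simp [hΦC, hΨC, hEC]) (by simp [hEX, hΨX])
  exact RingHom.congr_fun h f

end RatFunc

theorem galois_descent_of_cocycle_general {L : Type*} [Field L] (σ : L ≃+* L)
    (E : RatFunc L ≃+* RatFunc L)
    (hEC : ∀ a : L, E (RatFunc.C a) = RatFunc.C (σ a))
    (hEX : E RatFunc.X = RatFunc.X)
    (φ g μ : RatFunc L)
    (a : L)
    -- composition with `μ`: the field embedding fixing `L` and sending `X` to `μ`
    (Φμ : RatFunc L →+* RatFunc L)
    (hΦμC : ∀ a : L, Φμ (RatFunc.C a) = RatFunc.C a) (hΦμX : Φμ RatFunc.X = μ)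
    -- composition with `ν`: the field embedding fixing `L` and sending `X` to `ν`
    (Φν : RatFunc L →+* RatFunc L)
    (hΦνC : ∀ a : L, Φν (RatFunc.C a) = RatFunc.C a)
    (hφ : φ = Φμ g) (h1 : E φ = Φν φ) (h2 : E μ = Φν μ) :
    E g = g := by
  have hconj : E (Φμ g) = Φν (Φμ (E g)) :=
    RatFunc.map_subst_eq_subst_map (σ := σ.toRingHom) (E := E.toRingHom) (Ψ := Φν.comp Φμ)
      hEC hEX hΦμC (fun a => by simp [hΦμC, hΦνC]) (by simp [hΦμX, h2]) g
  apply (Φν.comp Φμ).injective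
  simp only [RingHom.comp_apply, ← hconj, ← hφ, h1]

/-- Galois descent step: if `φ = g ∘ μ`, `σ̂(φ) = φ ∘ ν` and `σ̂(μ) = μ ∘ ν`
(for Möbius transformations `μ`, `ν`), then `σ̂(g) = g`.  Here `σ̂` is the
automorphism of `RatFunc L` acting on coefficients via `σ` and fixing `X`,
and `f ∘ m` is the image of `f` under the `L`-embedding sending `X` to `m`. -/
theorem galois_descent_of_cocycle {L : Type*} [Field L] (σ : L ≃+* L)
    (E : RatFunc L ≃+* RatFunc L)
    (hEC : ∀ a : L, E (RatFunc.C a) = RatFunc.C (σ a))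
    (hEX : E RatFunc.X = RatFunc.X)
    (φ g μ ν : RatFunc L)
    -- `μ` is a Möbius transformation
    (a b c d : L) (habcd : a * d - b * c ≠ 0)
    (hμ : μ = (RatFunc.C a * RatFunc.X + RatFunc.C b) /
              (RatFunc.C c * RatFunc.X + RatFunc.C d))
    -- `ν` is a Möbius transformation
    (a' b' c' d' : L) (habcd' : a' * d' - b' * c' ≠ 0)
    (hν : ν = (RatFunc.C a' * RatFunc.X + RatFunc.C b') /
              (RatFunc.C c' * RatFunc.X + RatFunc.C d'))
    -- composition with `μ`: the field embedding fixing `L` and sending `X` to `μ`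
    (Φμ : RatFunc L →+* RatFunc L)
    (hΦμC : ∀ a : L, Φμ (RatFunc.C a) = RatFunc.C a) (hΦμX : Φμ RatFunc.X = μ)
    -- composition with `ν`: the field embedding fixing `L` and sending `X` to `ν`
    (Φν : RatFunc L →+* RatFunc L)
    (hΦνC : ∀ a : L, Φν (RatFunc.C a) = RatFunc.C a) (hΦνX : Φν RatFunc.X = ν)
    (hφ : φ = Φμ g) (h1 : E φ = Φν φ) (h2 : E μ = Φν μ) :
    E g = g :=
  galois_descent_of_cocycle_general σ E hEC hEX φ g μ a Φμ hΦμC hΦμX Φν hΦνC hφ h1 h2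
end
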